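/- arXiv:0803.2785 — 4 statements merged into one kernel-verified Lean document; each statement's English description precedes it below -/
import Mathlib

section
/- The operators Φ and Ψ on the space ℂ_n[X] of polynomials of degree at most n, defined by (Φp)(X) = p(X+1) and (Ψp)(X) = (1-X)ⁿ·p(X/(1-X)), satisfy the braid relation Φ∘Ψ∘Φ = Ψ∘Φ∘Ψ. -/
open Polynomial

/-- Ferrand's operator `Φ : p(X) ↦ p(X+1)`. -/
noncomputable def ferrandPhi (p : Polynomial ℂ) : Polynomial ℂ :=
  p.comp (X + 1)

/-- Ferrand's operator `Ψ : p(X) ↦ (1-X)ⁿ p(X/(1-X))`, written via the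
coefficients of `p` as `Σ_k (coeff p k) Xᵏ (1-X)^{n-k}`. -/
noncomputable def ferrandPsi (n : ℕ) (p : Polynomial ℂ) : Polynomial ℂ :=
  ∑ k ∈ Finset.range (n + 1), Polynomial.C (p.coeff k) * X ^ k * (1 - X) ^ (n - k)

/-!
`Φ` and `Ψ` are the weight-`n` actions of the Möbius maps `z ↦ z + 1` and `z ↦ z / (1 - z)`, i.e.
of the matrices `[[1, 1], [0, 1]]` and `[[1, 0], [-1, 1]]`, which satisfy the braid relation.
Concretely, for `z ∉ {0, 1}` both sides evaluate to `(-z)ⁿ p(-1/z)`, and two polynomials agreeing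
at infinitely many points are equal.
-/

lemma eval_ferrandPhi (p : ℂ[X]) (z : ℂ) : (ferrandPhi p).eval z = p.eval (z + 1) := by
  simp [ferrandPhi, eval_comp]

lemma natDegree_ferrandPhi (p : ℂ[X]) : (ferrandPhi p).natDegree = p.natDegree := by
  rw [ferrandPhi, natDegree_comp, ← C_1, natDegree_X_add_C, mul_one]

lemma natDegree_ferrandPsi_le (n : ℕ) (p : ℂ[X]) : (ferrandPsi n p).natDegree ≤ n := by
  refine natDegree_sum_le_of_forall_le _ _ fun k hk => ?_
  have hk : k ≤ n := Nat.lt_succ_iff.mp (Finset.mem_range.mp hk)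
  compute_degree
  omega

lemma eval_ferrandPsi {n : ℕ} {p : ℂ[X]} (hp : p.natDegree ≤ n) {z : ℂ} (hz : z ≠ 1) :
    (ferrandPsi n p).eval z = (1 - z) ^ n * p.eval (z / (1 - z)) := by
  have hz' : 1 - z ≠ 0 := sub_ne_zero.mpr hz.symm
  rw [eval_eq_sum_range' (Nat.lt_succ_of_le hp), ferrandPsi, eval_finsetSum, Finset.mul_sum]
  refine Finset.sum_congr rfl fun k hk => ?_
  have hk : k ≤ n := Nat.lt_succ_iff.mp (Finset.mem_range.mp hk)
  have hsplit : (1 - z) ^ n = (1 - z) ^ (n - k) * (1 - z) ^ k := by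
    rw [← pow_add, Nat.sub_add_cancel hk]
  simp only [eval_mul, eval_C, eval_pow, eval_X, eval_sub, eval_one]
  rw [hsplit, div_pow]
  field_simp

lemma eval_ferrandPhi_ferrandPsi_ferrandPhi {n : ℕ} {p : ℂ[X]} (hp : p.natDegree ≤ n) {z : ℂ}
    (hz : z ≠ 0) :
    (ferrandPhi (ferrandPsi n (ferrandPhi p))).eval z = (-z) ^ n * p.eval (-1 / z) := by
  rw [eval_ferrandPhi, eval_ferrandPsi ((natDegree_ferrandPhi p).trans_le hp) (by simpa using hz),
    eval_ferrandPhi, show 1 - (z + 1) = -z by ring]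
  congr 2
  field_simp
  ring

lemma eval_ferrandPsi_ferrandPhi_ferrandPsi {n : ℕ} {p : ℂ[X]} (hp : p.natDegree ≤ n) {z : ℂ}
    (hz₀ : z ≠ 0) (hz₁ : z ≠ 1) :
    (ferrandPsi n (ferrandPhi (ferrandPsi n p))).eval z = (-z) ^ n * p.eval (-1 / z) := by
  have h1z : 1 - z ≠ 0 := sub_ne_zero.mpr hz₁.symm
  have hshift : z / (1 - z) + 1 = (1 - z)⁻¹ := by field_simp; ring
  have hw : 1 - (1 - z)⁻¹ = -z / (1 - z) := by field_simp; ring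
  rw [eval_ferrandPsi ((natDegree_ferrandPhi _).trans_le (natDegree_ferrandPsi_le n p)) hz₁,
    eval_ferrandPhi, hshift, eval_ferrandPsi hp (by simpa [hw] using hz₀), hw, ← mul_assoc,
    ← mul_pow]
  congr 2 <;> field_simp

theorem ferrand_braid_relation (n : ℕ) (p : Polynomial ℂ) (hp : p.degree ≤ n) :
    ferrandPhi (ferrandPsi n (ferrandPhi p)) = ferrandPsi n (ferrandPhi (ferrandPsi n p)) := by
  replace hp : p.natDegree ≤ n := natDegree_le_of_degree_le hp
  refine eq_of_infinite_eval_eq _ _ (((Set.toFinite {0, 1}).infinite_compl).mono ?_)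
  intro z hz
  simp only [Set.mem_compl_iff, Set.mem_insert_iff, Set.mem_singleton_iff, not_or] at hz
  obtain ⟨hz₀, hz₁⟩ := hz
  rw [Set.mem_ofPred_eq, eval_ferrandPhi_ferrandPsi_ferrandPhi hp hz₀,
    eval_ferrandPsi_ferrandPhi_ferrandPsi hp hz₀ hz₁]
end

section
/- For any nonzero complex numbers λ₁, λ₂, λ₃, the 3×3 matrices σ₁ = [[λ₁, λ₁λ₃λ₂⁻¹+λ₂, λ₂],[0, λ₂, λ₂],[0, 0, λ₃]] and σ₂ = [[λ₃,0,0],[-λ₂,λ₂,0],[λ₂, -λ₁λ₃λ₂⁻¹-λ₂, λ₁]] satisfy the braid relation σ₁σ₂σ₁ = σ₂σ₁σ₂. -/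
/-!
Writing `c` for the entry `λ₁λ₃λ₂⁻¹ + λ₂`, a direct computation over any commutative ring gives
`σ₁σ₂σ₁ - σ₂σ₁σ₂ = (λ₁λ₃ - λ₂c + λ₂²) • M` for an explicit matrix `M`, and this choice of `c` is
exactly the one that makes the scalar factor vanish.
-/

namespace TubaWenzl

variable {R : Type*} [CommRing R]

def σ₁ (a b c d : R) : Matrix (Fin 3) (Fin 3) R :=
  !![a, c, b; 0, b, b; 0, 0, d]

def σ₂ (a b c d : R) : Matrix (Fin 3) (Fin 3) R :=
  !![d, 0, 0; -b, b, 0; b, -c, a]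

theorem σ₁_mul_σ₂_mul_σ₁_sub (a b c d : R) :
    σ₁ a b c d * σ₂ a b c d * σ₁ a b c d - σ₂ a b c d * σ₁ a b c d * σ₂ a b c d =
      (a * d - b * c + b ^ 2) • !![a - d, c, b; b, 0, b; -b, c, d - a] := by
  ext i j
  fin_cases i <;> fin_cases j <;>
    simp [σ₁, σ₂] <;> ring

theorem σ₁_mul_σ₂_mul_σ₁ {a b c d : R} (hc : b * c = a * d + b ^ 2) :
    σ₁ a b c d * σ₂ a b c d * σ₁ a b c d = σ₂ a b c d * σ₁ a b c d * σ₂ a b c d := by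
  rw [← sub_eq_zero, σ₁_mul_σ₂_mul_σ₁_sub, hc]
  simp

end TubaWenzl

theorem tuba_wenzl_dim3_general (l1 l2 l3 : ℂ) (h2 : l2 ≠ 0) :
    let s1 : Matrix (Fin 3) (Fin 3) ℂ :=
      !![l1, l1 * l3 * l2⁻¹ + l2, l2; 0, l2, l2; 0, 0, l3]
    let s2 : Matrix (Fin 3) (Fin 3) ℂ :=
      !![l3, 0, 0; -l2, l2, 0; l2, -(l1 * l3 * l2⁻¹) - l2, l1]
    s1 * s2 * s1 = s2 * s1 * s2 := by
  have hc : l2 * (l1 * l3 * l2⁻¹ + l2) = l1 * l3 + l2 ^ 2 := by field_simp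
  have := TubaWenzl.σ₁_mul_σ₂_mul_σ₁ hc
  simpa only [TubaWenzl.σ₁, TubaWenzl.σ₂, neg_add'] using this

theorem tuba_wenzl_dim3 (l1 l2 l3 : ℂ) (h1 : l1 ≠ 0) (h2 : l2 ≠ 0) (h3 : l3 ≠ 0) :
    let s1 : Matrix (Fin 3) (Fin 3) ℂ :=
      !![l1, l1 * l3 * l2⁻¹ + l2, l2; 0, l2, l2; 0, 0, l3]
    let s2 : Matrix (Fin 3) (Fin 3) ℂ :=
      !![l3, 0, 0; -l2, l2, 0; l2, -(l1 * l3 * l2⁻¹) - l2, l1]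
    s1 * s2 * s1 = s2 * s1 * s2 :=
  tuba_wenzl_dim3_general l1 l2 l3 h2
end

section
/- For a nilpotent strictly upper triangular (n+1)×(n+1) matrix E_q with (E_q)_{k,k+1} = (n-k)_q (the q-integer (m)_q = 1+q+⋯+q^{m-1}) and all other entries zero, the q-exponential exp_q(E_q) := Σ_{m≥0} E_qᵐ/(m)!_q has entries (exp_q(E_q))_{ij} = (n-i choose j-i)_q · q-binomial coefficients, i.e. equals the q-Pascal triangle matrix σ₁(q,n) with (σ₁(q,n))_{ij} = Gaussian binomial (n-i choose j-i)_q for i ≤ j. -/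
/-- The q-integer `(k)_q = (qᵏ - 1)/(q - 1)`. -/
noncomputable def qInt (q : ℂ) (k : ℕ) : ℂ := (q ^ k - 1) / (q - 1)

/-- `(n)!_q = ∏_{k=1}^n (k)_q`. -/
noncomputable def qFact (q : ℂ) (n : ℕ) : ℂ := ∏ k ∈ Finset.range n, qInt q (k + 1)

/-- Gaussian binomial coefficient `(n choose k)_q`. -/
noncomputable def qBinom (q : ℂ) (n k : ℕ) : ℂ :=
  qFact q n / (qFact q k * qFact q (n - k))

/-! `Eᵐ/(m)!_q` has a single nonzero diagonal, the `m`-th one, and there its entry in row `i` is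
the falling q-factorial `(n-i)_q (n-i-1)_q ⋯ (n-i-m+1)_q / (m)!_q`. Completing the falling
factorial to `(n-i)!_q` by `(n-j)!_q`, where `j = i + m`, turns it into `(n-i choose m)_q`. -/

theorem pow_superdiagonal_apply {R : Type*} [CommSemiring R] {N : ℕ} (d : ℕ → R) (m : ℕ)
    (i j : Fin N) :
    ((Matrix.of fun i j : Fin N => if (j : ℕ) = i + 1 then d i else 0) ^ m) i j =
      if (j : ℕ) = i + m then ∏ t ∈ Finset.range m, d (i + t) else 0 := by
  induction m generalizing j with
  | zero => simp [Matrix.one_apply, Fin.ext_iff, eq_comm]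
  | succ m ih =>
    rw [pow_succ, Matrix.mul_apply]
    simp only [ih, Matrix.of_apply, ite_mul, zero_mul, mul_ite, mul_zero]
    by_cases hj : (j : ℕ) = i + (m + 1)
    · rw [Fintype.sum_eq_single ⟨i + m, by omega⟩ fun l hl => ?_]
      · simp [hj, Finset.prod_range_succ, add_assoc]
      · have : (l : ℕ) ≠ i + m := fun h => hl (Fin.ext h)
        simp [this]
    · rw [if_neg hj]
      exact Finset.sum_eq_zero fun l _ => by split_ifs <;> first | rfl | omega

theorem qFact_zero (q : ℂ) : qFact q 0 = 1 := by
  simp [qFact]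

theorem qFact_succ (q : ℂ) (m : ℕ) : qFact q (m + 1) = qFact q m * qInt q (m + 1) :=
  Finset.prod_range_succ _ m

theorem prod_qInt_sub_mul_qFact (q : ℂ) {a k : ℕ} (hk : k ≤ a) :
    (∏ t ∈ Finset.range k, qInt q (a - t)) * qFact q (a - k) = qFact q a := by
  induction k with
  | zero => simp
  | succ k ih =>
    rw [Finset.prod_range_succ, ← ih (by omega), show a - k = a - (k + 1) + 1 by omega,
      qFact_succ, show a - (k + 1) + 1 = a - k by omega]
    ring

theorem qBinom_eq_prod_qInt_sub_div (q : ℂ) {a k : ℕ} (hk : k ≤ a) (h : qFact q (a - k) ≠ 0) :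
    qBinom q a k = (∏ t ∈ Finset.range k, qInt q (a - t)) / qFact q k := by
  rw [qBinom, ← prod_qInt_sub_mul_qFact q hk, mul_div_mul_right _ _ h]

theorem qexp_eq_qpascal (n : ℕ) (q : ℂ)
    (hfac : ∀ m : ℕ, 1 ≤ m → m ≤ n → qFact q m ≠ 0) :
    let E : Matrix (Fin (n + 1)) (Fin (n + 1)) ℂ :=
      Matrix.of fun i j => if (j : ℕ) = (i : ℕ) + 1 then qInt q (n - (i : ℕ)) else 0
    -- the q-exponential `exp_q(E) = Σ_m Eᵐ/(m)!_q`, a finite sum since `E^{n+1} = 0`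
    (∑ m ∈ Finset.range (n + 2), (qFact q m)⁻¹ • E ^ m) =
      Matrix.of fun (i j : Fin (n + 1)) =>
        if (i : ℕ) ≤ (j : ℕ) then qBinom q (n - (i : ℕ)) ((j : ℕ) - (i : ℕ)) else 0 := by
  intro E
  ext i j
  simp only [E, Matrix.sum_apply, Matrix.smul_apply, smul_eq_mul, Matrix.of_apply,
    pow_superdiagonal_apply (fun i => qInt q (n - i)), mul_ite, mul_zero]
  split_ifs with hij
  · obtain ⟨k, hjk⟩ := Nat.exists_eq_add_of_le hij
    rw [hjk]
    have hk : k ≤ n - i := by omega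
    have hfac_rest : qFact q (n - i - k) ≠ 0 := by
      rcases Nat.eq_zero_or_pos (n - i - k) with h | h
      · rw [h, qFact_zero]; exact one_ne_zero
      · exact hfac _ h (by omega)
    simp only [add_right_inj, Finset.sum_ite_eq, Finset.mem_range, Nat.add_sub_cancel_left,
      qBinom_eq_prod_qInt_sub_div q hk hfac_rest, Nat.sub_sub, div_eq_inv_mul]
    rw [if_pos (by omega)]
  · exact Finset.sum_eq_zero fun m _ => if_neg (by omega)
end

section
/- Let ρ(n) denote the (n+1)-dimensional irreducible representation of sl₂ with ρ(n)(X) the matrix with entries (n-k) on the superdiagonal (positions (k,k+1)) and ρ(n)(Y) the matrix with entries (k+1) on the subdiagonal (positions (k+1,k)), rows/columns indexed 0..n. Then the matrices exp(ρ(n)(X)) and exp(-ρ(n)(Y)) satisfy the braid relation A·B·A = B·A·B. -/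
/-!
Write `a = exp e` and `b = exp (-f)` for the nilpotent elements `e = ρ(X)`, `f = ρ(Y)`, and
let `h = ρ(H)`. Conjugation by `exp x` is `exp (ad x)`, and the sl₂ relations make these series
stop after the quadratic term, so `a` and `b` move `e`, `f`, `h` past themselves explicitly;
combining them gives `s e = -f s` for `s = a b a`. Exponentiating, `s a = b s`, that is
`(a b a) a = (b a b) a`, and `a` is invertible.
-/

open Matrix

section NilpotentExp

variable {A : Type*} [Ring A] [Algebra ℚ A]

theorem IsNilpotent.exp_mulLeft {a : A} (ha : IsNilpotent a) :
    IsNilpotent.exp (LinearMap.mulLeft ℚ a) = LinearMap.mulLeft ℚ (IsNilpotent.exp a) := by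
  obtain ⟨k, hk⟩ := ha
  rw [IsNilpotent.exp_eq_sum hk,
    IsNilpotent.exp_eq_sum (by rw [LinearMap.pow_mulLeft, hk, LinearMap.mulLeft_zero_eq_zero])]
  ext y
  simp [Finset.sum_mul]

theorem IsNilpotent.exp_mulRight {a : A} (ha : IsNilpotent a) :
    IsNilpotent.exp (LinearMap.mulRight ℚ a) = LinearMap.mulRight ℚ (IsNilpotent.exp a) := by
  obtain ⟨k, hk⟩ := ha
  rw [IsNilpotent.exp_eq_sum hk,
    IsNilpotent.exp_eq_sum (by rw [LinearMap.pow_mulRight, hk, LinearMap.mulRight_zero_eq_zero])]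
  ext y
  simp [Finset.mul_sum]

theorem IsNilpotent.isNilpotent_mulLeft_sub_mulRight {a : A} (ha : IsNilpotent a) :
    IsNilpotent (LinearMap.mulLeft ℚ a - LinearMap.mulRight ℚ a) :=
  (LinearMap.commute_mulLeft_right a a).isNilpotent_sub
    ((LinearMap.isNilpotent_mulLeft_iff ℚ a).mpr ha) ((LinearMap.isNilpotent_mulRight_iff ℚ a).mpr ha)

/-- `Ad (exp a) = exp (ad a)`, where `ad a = mulLeft a - mulRight a`. -/
theorem IsNilpotent.exp_mul_eq_exp_ad_apply_mul {a : A} (ha : IsNilpotent a) (y : A) :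
    IsNilpotent.exp a * y =
      IsNilpotent.exp (LinearMap.mulLeft ℚ a - LinearMap.mulRight ℚ a) y * IsNilpotent.exp a := by
  set L := LinearMap.mulLeft ℚ a
  set R := LinearMap.mulRight ℚ a
  have hR : IsNilpotent R := (LinearMap.isNilpotent_mulRight_iff ℚ a).mpr ha
  have hRD : Commute R (L - R) :=
    (LinearMap.commute_mulLeft_right a a).symm.sub_right (Commute.refl R)
  calc IsNilpotent.exp a * y = IsNilpotent.exp (R + (L - R)) y := by
        rw [add_sub_cancel, ha.exp_mulLeft]; rfl
    _ = IsNilpotent.exp R (IsNilpotent.exp (L - R) y) := by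
      rw [IsNilpotent.exp_add_of_commute hRD hR ha.isNilpotent_mulLeft_sub_mulRight]; rfl
    _ = _ := by rw [ha.exp_mulRight]; rfl

theorem IsNilpotent.exp_mul_eq_of_iterated_commutator {a y p q : A} (ha : IsNilpotent a)
    (hp : a * y - y * a = p) (hq : a * p - p * a = q) (hq₀ : a * q - q * a = 0) :
    IsNilpotent.exp a * y = (y + p + (2 : ℚ)⁻¹ • q) * IsNilpotent.exp a := by
  set D := LinearMap.mulLeft ℚ a - LinearMap.mulRight ℚ a
  have hD (z : A) : D z = a * z - z * a := rfl
  have hD₁ : D y = p := hp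
  have hD₂ : (D ^ 2) y = q := by rw [sq, Module.End.mul_apply, hD₁, hD, hq]
  have hD₃ : (D ^ 3) • y = 0 := by
    rw [Module.End.smul_def, _root_.pow_succ', Module.End.mul_apply, hD₂, hD, hq₀]
  rw [ha.exp_mul_eq_exp_ad_apply_mul, ← Module.End.smul_def,
    IsNilpotent.exp_smul_eq_sum hD₃ ha.isNilpotent_mulLeft_sub_mulRight]
  simp [Finset.sum_range_succ, Module.End.smul_def, hD₁, hD₂]

theorem IsNilpotent.semiconjBy_exp {s x y : A} (h : SemiconjBy s x y) (hx : IsNilpotent x)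
    (hy : IsNilpotent y) : SemiconjBy s (IsNilpotent.exp x) (IsNilpotent.exp y) := by
  obtain ⟨k, hk⟩ := hx
  obtain ⟨l, hl⟩ := hy
  rw [SemiconjBy, IsNilpotent.exp_eq_sum (pow_eq_zero_of_le (le_max_left k l) hk),
    IsNilpotent.exp_eq_sum (pow_eq_zero_of_le (le_max_right k l) hl), Finset.mul_sum,
    Finset.sum_mul]
  refine Finset.sum_congr rfl fun i _ => ?_
  rw [mul_smul_comm, smul_mul_assoc, (h.pow_right i).eq]

theorem IsNilpotent.exp_braid_of_sl2_relations {e f h : A} (he : IsNilpotent e)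
    (hf : IsNilpotent f) (hef : e * f - f * e = h) (hhe : h * e - e * h = 2 • e)
    (hhf : h * f - f * h = -(2 • f)) :
    exp e * exp (-f) * exp e = exp (-f) * exp e * exp (-f) := by
  set a := exp e
  set b := exp (-f)
  have heh : e * h - h * e = -(2 • e) := by rw [← hhe, neg_sub]
  have hfh : -f * h - h * -f = -(2 • f) := by rw [← hhf]; noncomm_ring
  have hee : e * -(2 • e) - -(2 • e) * e = 0 := by noncomm_ring
  have hff : -f * -(2 • f) - -(2 • f) * -f = 0 := by noncomm_ring
  have hae : a * e = e * a := by
    simpa using he.exp_mul_eq_of_iterated_commutator (p := 0) (q := 0) (sub_self _) (by simp)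
      (by simp)
  have hah : a * h = (h + -(2 • e)) * a := by
    simpa using he.exp_mul_eq_of_iterated_commutator heh hee (by simp)
  have haf : a * f = (f + h + (2 : ℚ)⁻¹ • -(2 • e)) * a :=
    he.exp_mul_eq_of_iterated_commutator hef heh hee
  have hbe : b * e = (e + h + (2 : ℚ)⁻¹ • -(2 • f)) * b :=
    hf.neg.exp_mul_eq_of_iterated_commutator (by rw [← hef]; noncomm_ring) hfh hff
  have ha : SemiconjBy a (e + h + (2 : ℚ)⁻¹ • -(2 • f)) (-f) := by
    simp only [SemiconjBy, mul_add, mul_smul_comm, mul_neg, hae, hah, haf]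
    simp only [add_mul, smul_mul_assoc, neg_mul]
    module
  have hs : SemiconjBy (a * b * a) e (-f) := (ha.mul_left hbe).mul_left hae
  have hsa : a * b * a * a = b * (a * b * a) := he.semiconjBy_exp hs hf.neg
  rw [← he.isUnit_exp.mul_left_inj]
  simpa only [mul_assoc] using hsa

end NilpotentExp

theorem NormedSpace.exp_eq_isNilpotent_exp {A : Type*} [Ring A] [Algebra ℚ A]
    [TopologicalSpace A] [IsTopologicalRing A] {a : A} (ha : IsNilpotent a) :
    NormedSpace.exp a = IsNilpotent.exp a := by
  obtain ⟨k, hk⟩ := ha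
  rw [NormedSpace.exp_eq_tsum_rat, IsNilpotent.exp_eq_sum hk]
  exact tsum_eq_sum fun i hi => by
    rw [pow_eq_zero_of_le (by simpa using hi) hk, smul_zero]

theorem Matrix.isNilpotent_of_isUpperTriangular {ι R : Type*} [Fintype ι] [DecidableEq ι]
    [LinearOrder ι] [CommRing R] {M : Matrix ι ι R} (hM : M.IsUpperTriangular)
    (hdiag : ∀ i, M i i = 0) : IsNilpotent M :=
  ⟨Fintype.card ι, by simpa [charpoly_of_isUpperTriangular M hM, hdiag] using aeval_self_charpoly M⟩

namespace Sl2Irrep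

variable (n : ℕ)

def X : Matrix (Fin (n + 1)) (Fin (n + 1)) ℂ :=
  Matrix.of fun i j => if (j : ℕ) = (i : ℕ) + 1 then ((n - (i : ℕ) : ℕ) : ℂ) else 0

def Y : Matrix (Fin (n + 1)) (Fin (n + 1)) ℂ :=
  Matrix.of fun i j => if (i : ℕ) = (j : ℕ) + 1 then (((j : ℕ) + 1 : ℕ) : ℂ) else 0

def H : Matrix (Fin (n + 1)) (Fin (n + 1)) ℂ :=
  Matrix.diagonal fun i => (n : ℂ) - 2 * (i : ℕ)

theorem X_mul_Y : X n * Y n = diagonal fun i : Fin (n + 1) => (((n - i) * (i + 1) : ℕ) : ℂ) := by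
  ext i j
  simp only [mul_apply, X, Y, of_apply]
  rw [Fin.sum_univ_eq_sum_range (fun k => (if k = (i : ℕ) + 1 then ((n - i : ℕ) : ℂ) else 0) *
    (if k = (j : ℕ) + 1 then ((j + 1 : ℕ) : ℂ) else 0))]
  rcases eq_or_ne i j with rfl | hij
  · rcases (Fin.is_le i).lt_or_eq with hi | hi <;> simp [Finset.sum_ite_eq', hi]
  · simp [Finset.sum_ite_eq', hij, Fin.val_ne_of_ne hij.symm]

theorem Y_mul_X : Y n * X n = diagonal fun i : Fin (n + 1) => ((i * (n + 1 - i) : ℕ) : ℂ) := by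
  ext i j
  simp only [mul_apply, X, Y, of_apply]
  rw [Fin.sum_univ_eq_sum_range (fun k => (if (i : ℕ) = k + 1 then ((k + 1 : ℕ) : ℂ) else 0) *
    (if (j : ℕ) = k + 1 then ((n - k : ℕ) : ℂ) else 0))]
  obtain ⟨_ | i, hi⟩ := i
  · simp [diagonal_apply]
  obtain ⟨j, hj⟩ := j
  rw [Finset.sum_eq_single i (fun x _ hx => by simp [Ne.symm hx])
    (fun h => absurd (Finset.mem_range.2 (by omega)) h)]
  rcases eq_or_ne j (i + 1) with rfl | h
  · rw [diagonal_apply_eq, Nat.add_sub_add_right]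
    simp [mul_comm]
  · simp [h, Ne.symm h]

theorem X_mul_Y_sub_Y_mul_X : X n * Y n - Y n * X n = H n := by
  rw [X_mul_Y, Y_mul_X, diagonal_sub, H]
  congr with i
  have hi := Fin.is_le i
  push_cast [Nat.cast_sub hi, Nat.cast_sub (hi.trans n.le_succ)]
  ring

theorem H_mul_X_sub_X_mul_H : H n * X n - X n * H n = 2 • X n := by
  ext i j
  simp only [H, X, Matrix.sub_apply, diagonal_mul, mul_diagonal, of_apply, Matrix.smul_apply]
  split_ifs with h
  · rw [h]; push_cast; ring
  · simp

theorem H_mul_Y_sub_Y_mul_H : H n * Y n - Y n * H n = -(2 • Y n) := by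
  ext i j
  simp only [H, Y, Matrix.sub_apply, diagonal_mul, mul_diagonal, of_apply, Matrix.smul_apply,
    Matrix.neg_apply]
  split_ifs with h
  · rw [h]; push_cast; ring
  · simp

theorem isNilpotent_X : IsNilpotent (X n) :=
  isNilpotent_of_isUpperTriangular (fun i j (hji : j < i) => if_neg (by omega))
    fun i => if_neg (by omega)

theorem isNilpotent_Y : IsNilpotent (Y n) :=
  isNilpotent_transpose_iff.mp <| isNilpotent_of_isUpperTriangular
    (fun i j (hji : j < i) => if_neg (by omega)) fun i => if_neg (by omega)

end Sl2Irrep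

theorem exp_sl2_braid_relation (n : ℕ) :
    let X : Matrix (Fin (n + 1)) (Fin (n + 1)) ℂ :=
      Matrix.of fun i j => if (j : ℕ) = (i : ℕ) + 1 then ((n - (i : ℕ) : ℕ) : ℂ) else 0
    let Y : Matrix (Fin (n + 1)) (Fin (n + 1)) ℂ :=
      Matrix.of fun i j => if (i : ℕ) = (j : ℕ) + 1 then (((j : ℕ) + 1 : ℕ) : ℂ) else 0
    let A := NormedSpace.exp X
    let B := NormedSpace.exp (-Y)
    A * B * A = B * A * B := by
  intro X Y A B
  have hX : IsNilpotent X := Sl2Irrep.isNilpotent_X n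
  have hY : IsNilpotent Y := Sl2Irrep.isNilpotent_Y n
  simp only [A, B, NormedSpace.exp_eq_isNilpotent_exp hX, NormedSpace.exp_eq_isNilpotent_exp hY.neg]
  exact hX.exp_braid_of_sl2_relations hY (Sl2Irrep.X_mul_Y_sub_Y_mul_X n)
    (Sl2Irrep.H_mul_X_sub_X_mul_H n) (Sl2Irrep.H_mul_Y_sub_Y_mul_H n)
end
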